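/- Consider a tower of fields K ⊆ E ⊆ E' where K is infinite and E'/E is an extension of algebraically closed fields with transcendence basis {α} (a single element). Suppose R is a subring of E' that is finitely generated as an E-algebra. Then there exists an E-rational place P of E' such that P(α) and P(α^{-1}) lie in K and P is finite on R (i.e. P maps every element of R into E, not to ∞). -/

import Mathlib

noncomputable section

open HahnSeries Classical

/-- A field is real closed: `-1` is not a square, every element or its negative is a square,
and every polynomial of odd degree has a root. -/
def IsRealClosedField (F : Type*) [Field F] : Prop :=
  (¬ ∃ x : F, x ^ 2 = -1) ∧ (∀ x : F, ∃ y : F, y ^ 2 = x ∨ y ^ 2 = -x) ∧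
    ∀ p : Polynomial F, Odd p.natDegree → ∃ x : F, p.eval x = 0

/-- Applying a map `p : F → F'` (e.g. the residue map of a place) to each coefficient
of a generalized power series; coefficients equal to `0` are sent to `0`. -/
def coeffMap {G : Type*} [PartialOrder G] {F F' : Type*} [Zero F] [Zero F']
    (p : F → F') (f : HahnSeries G F) : HahnSeries G F' where
  coeff g := if f.coeff g = 0 then 0 else p (f.coeff g)
  isPWO_support' := f.isPWO_support'.mono (fun g hg h => by
    simp only [Function.mem_support, h, if_pos] at hg
    exact hg rfl)

variable (F : Type*) [Field F] (G : Type*) [AddCommGroup G] [LinearOrder G] [IsOrderedAddMonoid G]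

/-- The minimal support valuation on the field of generalized power series `F((G))`,
with value `⊤` at `0`. -/
def vmin (f : HahnSeries G F) : WithTop G := f.orderTop

/-- The set of generalized power series all of whose coefficients lie in `S`. -/
def coeffIn (S : Set F) : Set (HahnSeries G F) := {f | ∀ g : G, f.coeff g ∈ S}

/-- For a subfield `E ⊆ F`, the subfield `E(G)` of `F((G))`: the fraction field of the
group ring `E[G]`, i.e. the subfield generated by the monomials with coefficients in `E`. -/
def ratSubfieldOver (E : Subfield F) : Subfield (HahnSeries G F) :=
  Subfield.closure {x | ∃ (g : G) (a : F), a ∈ E ∧ x = HahnSeries.single g a}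

/-- The subfield `F(G)` of rational functions inside `F((G))`. -/
def ratSubfield : Subfield (HahnSeries G F) := ratSubfieldOver F G ⊤

/-- The valuation ideal `I_L` of a subset `L ⊆ F((G))` (w.r.t. the minimal support
valuation). -/
def valIdeal (L : Set (HahnSeries G F)) : Set (HahnSeries G F) :=
  {f ∈ L | 0 < vmin F G f}

/-- The set `U_L = 1 + I_L` of 1-units of a subset `L ⊆ F((G))`. -/
def oneUnits (L : Set (HahnSeries G F)) : Set (HahnSeries G F) :=
  {f ∈ L | 0 < vmin F G (1 - f)}

variable {F G} in
/-- The `K`-linear combination of elements of `F((G))` encoded by a finitely supported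
function `c` with values in the subfield `K`. -/
def lincomb {K : Subfield F} (c : HahnSeries G F →₀ K) : HahnSeries G F :=
  c.sum fun b r => (r : F) • b

/-- `B` is a `K`-valuation basis of the (`K`-subspace) subset `L` of `F((G))`:
it is contained in `L`, every element of `L` is a unique finite `K`-linear combination
of elements of `B`, and every such combination realizes as its value the minimum of the
values of the basis elements occurring in it. -/
def IsValuationBasis (K : Subfield F) (L B : Set (HahnSeries G F)) : Prop :=
  B ⊆ L ∧
    (∀ f ∈ L, ∃! c : HahnSeries G F →₀ K, ↑c.support ⊆ B ∧ f = lincomb c) ∧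
    ∀ c : HahnSeries G F →₀ K, ↑c.support ⊆ B →
      vmin F G (lincomb c) = c.support.inf fun b => vmin F G b

/-- `f = ∏ b^(c b)` where the exponents `c b` are rational numbers: there is a common
positive denominator `d` such that `f ^ d = ∏ b ^ (c b * d)` with integer exponents. -/
def qpowCombo (c : HahnSeries G F →₀ ℚ) (f : HahnSeries G F) : Prop :=
  ∃ d : ℕ, 0 < d ∧ (∀ b ∈ c.support, ((c b) * d).den = 1) ∧
    f ^ d = ∏ b ∈ c.support, b ^ ((c b) * d).num

/-- `B` is a `ℚ`-valuation basis of a subset `L` of the group of `1`-units of `F((G))`,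
with respect to the valuation `w f = v_min (1 - f)`, all operations being multiplicative. -/
def IsMultValuationBasis (L B : Set (HahnSeries G F)) : Prop :=
  B ⊆ L ∧
    (∀ f ∈ L, ∃! c : HahnSeries G F →₀ ℚ, ↑c.support ⊆ B ∧ qpowCombo F G c f) ∧
    ∀ c : HahnSeries G F →₀ ℚ, ↑c.support ⊆ B → ∀ f, qpowCombo F G c f →
      vmin F G (1 - f) = c.support.inf fun b => vmin F G (1 - b)

variable {F} in
/-- An `E`-rational place of `E'` (both subsets of an ambient field `F`): a valuation
subring `dom` of `E'` containing `E`, together with a residue map `res` which is a ring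
homomorphism on `dom`, restricts to the identity on `E`, has image in `E` (so the residue
field is `E`), and whose kernel consists exactly of the nonunits of `dom`. -/
structure RatPlace (E E' : Set F) where
  dom : Subring F
  dom_le : (dom : Set F) ⊆ E'
  res : F → F
  res_one : res 1 = 1
  res_add : ∀ x ∈ dom, ∀ y ∈ dom, res (x + y) = res x + res y
  res_mul : ∀ x ∈ dom, ∀ y ∈ dom, res (x * y) = res x * res y
  res_mem : ∀ x ∈ dom, res x ∈ E
  base_subset : E ⊆ dom
  res_id : ∀ x ∈ E, res x = x
  vring : ∀ x ∈ E', x ∉ dom → x⁻¹ ∈ dom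
  res_unit : ∀ x ∈ dom, res x ≠ 0 → x⁻¹ ∈ dom
  res_nonunit : ∀ x ∈ dom, x ≠ 0 → x⁻¹ ∈ dom → res x ≠ 0

variable {F} in
/-- `{α}` is a transcendence basis of `E'` over `E` (inside the ambient field `F`):
`α ∈ E'` is transcendental over `E` and every element of `E'` is algebraic over `E(α)`. -/
def IsSingleTransBasis (E E' : Subfield F) (α : F) : Prop :=
  α ∈ E' ∧ Transcendental E α ∧
    ∀ x ∈ E', IsAlgebraic (Subfield.closure ((E : Set F) ∪ {α})) x

/-- The transcendence degree reduction property over `K` (for `F` algebraically closed)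
of a subset `L` with `F(G) ⊆ L ⊆ F((G))`:
1. for each countable intermediate field `K ≤ E`, `E((G)) ∩ L` is countable and `L` is
   the union of these sets;
2. for intermediate algebraically closed fields `K ≤ E < E'` with `E'/E` of transcendence
   degree 1, any finitely many elements of `E'((G)) ∩ L` have all coefficients in the
   valuation ring of some `E`-rational place `P` of `E'`, with images under `φ_P` in
   `E((G)) ∩ L`;
3. moreover, for any fixed transcendence basis `{α}` of `E'/E`, the place `P` may be
   chosen to send `α` and `α⁻¹` into `K`. -/
def SatisfiesTDRPAC (K : Subfield F) (L : Set (HahnSeries G F)) : Prop :=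
  (∀ E : Subfield F, K ≤ E → (E : Set F).Countable →
      (coeffIn F G ↑E ∩ L).Countable) ∧
  (∀ f ∈ L, ∃ E : Subfield F, K ≤ E ∧ (E : Set F).Countable ∧ f ∈ coeffIn F G ↑E) ∧
  (∀ E E' : Subfield F, K ≤ E → E < E' → IsAlgClosed E → IsAlgClosed E' →
      (∃ α : F, IsSingleTransBasis E E' α) →
      ∀ (n : ℕ) (s : Fin n → HahnSeries G F),
        (∀ m, s m ∈ coeffIn F G ↑E' ∩ L) →
        ∃ P : RatPlace (E : Set F) (E' : Set F),
          (∀ m, s m ∈ coeffIn F G ↑P.dom) ∧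
          ∀ m, coeffMap P.res (s m) ∈ coeffIn F G ↑E ∩ L) ∧
  (∀ E E' : Subfield F, K ≤ E → E < E' → IsAlgClosed E → IsAlgClosed E' →
      ∀ α : F, IsSingleTransBasis E E' α →
      ∀ (n : ℕ) (s : Fin n → HahnSeries G F),
        (∀ m, s m ∈ coeffIn F G ↑E' ∩ L) →
        ∃ P : RatPlace (E : Set F) (E' : Set F),
          (∀ m, s m ∈ coeffIn F G ↑P.dom) ∧
          (∀ m, coeffMap P.res (s m) ∈ coeffIn F G ↑E ∩ L) ∧
          α ∈ P.dom ∧ α⁻¹ ∈ P.dom ∧ P.res α ∈ K ∧ P.res α⁻¹ ∈ K)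

variable {F} in
/-- The set `L ⊕ √-1·L` inside `F'((G))`, where `φ : F →+* F'` identifies `F` with a
subfield of `F'` and `i ∈ F'` is a square root of `-1`. -/
def complexifySet {F' : Type*} [Field F'] (φ : F →+* F') (i : F')
    (L : Set (HahnSeries G F)) : Set (HahnSeries G F') :=
  {z | ∃ x ∈ L, ∃ y ∈ L,
    z = coeffMap (⇑φ) x + HahnSeries.single (0 : G) i * coeffMap (⇑φ) y}

/-- The transcendence degree reduction property over `K` of `L ⊆ F((G))`, for `F`
algebraically closed or real closed.  In the real closed case it is the requirement that
`L ⊕ √-1·L`, viewed inside `F^a((G))` where `F^a = F(√-1)` is the algebraic closure of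
`F`, satisfies the TDRP over (the image of) `K`. -/
def SatisfiesTDRP (K : Subfield F) (L : Set (HahnSeries G F)) : Prop :=
  (IsAlgClosed F ∧ SatisfiesTDRPAC F G K L) ∨
  (IsRealClosedField F ∧ ∃ i : AlgebraicClosure F, i ^ 2 = -1 ∧
    SatisfiesTDRPAC (AlgebraicClosure F) G
      (K.map (algebraMap F (AlgebraicClosure F)))
      (complexifySet G (algebraMap F (AlgebraicClosure F)) i L))

/-- A transcendence basis `{α_λ}_{λ ∈ I}` of `F` over a subfield `K`: the family is
algebraically independent over `K` and `F` is algebraic over the subfield generated by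
`K` and the `α_λ`. -/
def IsTransBasisFamily {F : Type*} [Field F] (K : Subfield F) {I : Type*} (α : I → F) :
    Prop :=
  AlgebraicIndependent K α ∧
    ∀ x : F, IsAlgebraic (Subfield.closure ((K : Set F) ∪ Set.range α)) x

/-- For a subset `S ⊆ I`, the field `K_S`: the relative algebraic closure in `F` of the
subfield generated by `K` and the transcendence basis elements `α_λ`, `λ ∈ S`. -/
def KXset {F : Type*} [Field F] (K : Subfield F) {I : Type*} (α : I → F) (S : Set I) :
    Set F :=
  {x | IsAlgebraic (Subfield.closure ((K : Set F) ∪ α '' S)) x}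

/-!
Pick `c ∈ K`, `c ≠ 0`, that is not a zero of the denominators of the minimal polynomials of the
generators of `R` over `E(α)`, and extend the local ring of `E[α]` at `α = c` to a valuation ring
`B` of `E'` (Chevalley). Those minimal polynomials then have coefficients in `B`, so `R ⊆ B`, and
the residue of `α` is `c`. The residue field of `B` is `E`: on `E(α) ∩ B` the residue of
`p(α)/q(α)` is obtained by cancelling powers of `α - c` and evaluating at `c`; an arbitrary
element of `B` is algebraic over `E(α)`, and normalizing its minimal polynomial by a coefficient
of largest value makes its residue a root of a nonzero polynomial over the algebraically closed
field `E`.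
-/

open Polynomial IntermediateField

namespace RatPlace

variable {L : Type*} [Field L] {E E' : Set L} (P : RatPlace E E')

theorem res_zero : P.res 0 = 0 := by
  simpa using P.res_add 0 P.dom.zero_mem 0 P.dom.zero_mem

theorem res_inv {x : L} (hx : x ∈ P.dom) (h : P.res x ≠ 0) : P.res x⁻¹ = (P.res x)⁻¹ := by
  have hx0 : x ≠ 0 := by
    rintro rfl
    exact h P.res_zero
  have hmul := P.res_mul x hx x⁻¹ (P.res_unit x hx h)
  rw [mul_inv_cancel₀ hx0, P.res_one] at hmul
  exact eq_inv_of_mul_eq_one_right hmul.symm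

end RatPlace

namespace ValuationSubring

variable {L : Type*} [Field L] {B : ValuationSubring L}

theorem valuation_eq_one_of_mem_of_inv_mem {x : L} (hx : x ∈ B) (hxi : x⁻¹ ∈ B) (hx0 : x ≠ 0) :
    B.valuation x = 1 :=
  B.valuation_unit ⟨⟨x, hx⟩, ⟨x⁻¹, hxi⟩, Subtype.ext (mul_inv_cancel₀ hx0),
    Subtype.ext (inv_mul_cancel₀ hx0)⟩

theorem integers (B : ValuationSubring L) : B.valuation.Integers B :=
  ⟨Subtype.val_injective, B.valuation_le_one,
    fun {_} h => ⟨⟨_, B.mem_of_valuation_le_one _ h⟩, rfl⟩⟩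

variable (B) in
-- Junk value `0` when `x` has no residue in `E`.
def residueIn (E : Set L) (x : L) : L :=
  if h : ∃ e ∈ E, B.valuation (x - e) < 1 then h.choose else 0

variable {E : Subfield L} (hEB : (E : Set L) ⊆ B)
include hEB

theorem eq_of_valuation_sub_lt_one {x e₁ e₂ : L} (h₁ : e₁ ∈ E) (h₂ : e₂ ∈ E)
    (hx₁ : B.valuation (x - e₁) < 1) (hx₂ : B.valuation (x - e₂) < 1) : e₁ = e₂ := by
  by_contra hne
  have hlt : B.valuation (e₂ - e₁) < 1 := by
    simpa using B.valuation.map_sub_lt hx₁ hx₂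
  have hsub : e₂ - e₁ ∈ E := E.sub_mem h₂ h₁
  exact hlt.ne (valuation_eq_one_of_mem_of_inv_mem (hEB hsub) (hEB (E.inv_mem hsub))
    (sub_ne_zero.mpr (Ne.symm hne)))

theorem residueIn_eq {x e : L} (he : e ∈ E) (hx : B.valuation (x - e) < 1) :
    B.residueIn E x = e := by
  have hex : ∃ e ∈ (E : Set L), B.valuation (x - e) < 1 := ⟨e, he, hx⟩
  rw [residueIn, dif_pos hex]
  exact eq_of_valuation_sub_lt_one hEB hex.choose_spec.1 he hex.choose_spec.2 hx

variable (hres : ∀ x ∈ B, ∃ e ∈ E, B.valuation (x - e) < 1)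
include hres

theorem residueIn_spec {x : L} (hx : x ∈ B) :
    B.residueIn E x ∈ E ∧ B.valuation (x - B.residueIn E x) < 1 := by
  obtain ⟨e, he, hxe⟩ := hres x hx
  rw [residueIn_eq hEB he hxe]
  exact ⟨he, hxe⟩

end ValuationSubring

open ValuationSubring in
def RatPlace.ofValuationSubring {L : Type*} [Field L] (B : ValuationSubring L) (E : Subfield L)
    (hEB : (E : Set L) ⊆ B) (hres : ∀ x ∈ B, ∃ e ∈ E, B.valuation (x - e) < 1) :
    RatPlace (E : Set L) Set.univ where
  dom := B.toSubring
  dom_le := Set.subset_univ _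
  res := B.residueIn E
  res_one := residueIn_eq hEB E.one_mem (by simp)
  res_add x hx y hy := by
    obtain ⟨hxE, hx'⟩ := residueIn_spec hEB hres hx
    obtain ⟨hyE, hy'⟩ := residueIn_spec hEB hres hy
    refine residueIn_eq hEB (E.add_mem hxE hyE) ?_
    rw [add_sub_add_comm]
    exact B.valuation.map_add_lt hx' hy'
  res_mul x hx y hy := by
    obtain ⟨hxE, hx'⟩ := residueIn_spec hEB hres hx
    obtain ⟨hyE, hy'⟩ := residueIn_spec hEB hres hy
    refine residueIn_eq hEB (E.mul_mem hxE hyE) ?_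
    rw [show x * y - B.residueIn E x * B.residueIn E y
      = (x - B.residueIn E x) * y + B.residueIn E x * (y - B.residueIn E y) by ring]
    refine B.valuation.map_add_lt ?_ ?_ <;> rw [map_mul]
    · exact mul_lt_one_of_lt_of_le hx' (B.valuation_le_one_iff _ |>.mpr hy)
    · exact Right.mul_lt_one_of_le_of_lt (B.valuation_le_one_iff _ |>.mpr (hEB hxE)) hy'
  res_mem x hx := (residueIn_spec hEB hres hx).1
  base_subset := hEB
  res_id x hx := residueIn_eq hEB hx (by simp)
  vring x _ hx := (B.mem_or_inv_mem x).resolve_left hx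
  res_unit x hx h := by
    obtain ⟨hxE, hx'⟩ := residueIn_spec hEB hres hx
    have hr : B.valuation (B.residueIn E x) = 1 :=
      valuation_eq_one_of_mem_of_inv_mem (hEB hxE) (hEB (E.inv_mem hxE)) h
    have hv : B.valuation x = 1 := by
      rw [← sub_add_cancel x (B.residueIn E x), B.valuation.map_add_eq_of_lt_right (hr ▸ hx'), hr]
    exact (B.valuation_le_one_iff _).mp (by rw [map_inv₀, hv, inv_one])
  res_nonunit x hx hx0 hxi h := by
    have hx' := (residueIn_spec hEB hres hx).2
    rw [h, sub_zero] at hx'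
    have hlt := mul_lt_one_of_lt_of_le hx' ((B.valuation_le_one_iff _).mpr hxi)
    rw [← map_mul, mul_inv_cancel₀ hx0, map_one] at hlt
    exact hlt.false

section Residue

variable {L : Type*} [Field L] {B : ValuationSubring L}

theorem exists_aeval_eq_zero_coeff_mem {F : Type*} [Field F] [Algebra F L] {x : L}
    (hx : IsAlgebraic F x) :
    ∃ Q : F[X], aeval x Q = 0 ∧ (∀ i, algebraMap F L (Q.coeff i) ∈ B) ∧ ∃ j, Q.coeff j = 1 := by
  obtain ⟨P, hP0, hPx⟩ := hx
  obtain ⟨j, hj, hmax⟩ := P.support.exists_max_image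
    (fun i => B.valuation (algebraMap F L (P.coeff i))) (nonempty_support_iff.mpr hP0)
  have hj0 : P.coeff j ≠ 0 := mem_support_iff.mp hj
  refine ⟨Polynomial.C (P.coeff j)⁻¹ * P, by simp [hPx], fun i => ?_, j, by simp [hj0]⟩
  have hjv : 0 < B.valuation (algebraMap F L (P.coeff j)) :=
    B.valuation.pos_iff.mpr ((_root_.map_ne_zero _).mpr hj0)
  rw [coeff_C_mul, ← B.valuation_le_one_iff, map_mul, map_inv₀, map_mul, map_inv₀,
    inv_mul_le_one₀ hjv]
  by_cases hi : i ∈ P.support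
  · exact hmax i hi
  · simp [notMem_support_iff.mp hi]

variable {k : Type*} [Field k] [IsAlgClosed k] [Algebra k L]
  (hk : ∀ e : k, algebraMap k L e ∈ B)
include hk

theorem exists_valuation_sub_lt_one_of_valuation_aeval_lt_one {g : k[X]} (hg : g ≠ 0) {x : L}
    (hgx : B.valuation (aeval x g) < 1) : ∃ r : k, B.valuation (x - algebraMap k L r) < 1 := by
  by_contra! h
  have hlc : B.valuation (algebraMap k L g.leadingCoeff) = 1 :=
    ValuationSubring.valuation_eq_one_of_mem_of_inv_mem (hk _) (by rw [← map_inv₀]; exact hk _)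
      (by simpa using hg)
  rw [← C_leadingCoeff_mul_prod_multiset_X_sub_C (p := g) IsAlgClosed.card_roots_eq_natDegree]
    at hgx
  simp only [map_mul, aeval_C, map_multiset_prod, Multiset.map_map, Function.comp_def, map_sub,
    aeval_X, hlc, one_mul] at hgx
  exact hgx.not_ge (Multiset.one_le_prod_map fun r _ => h r)

theorem exists_valuation_sub_lt_one_of_isAlgebraic {F : Type*} [Field F] [Algebra F L]
    (hF : ∀ y : F, algebraMap F L y ∈ B →
      ∃ e : k, B.valuation (algebraMap F L y - algebraMap k L e) < 1)
    {x : L} (hx : x ∈ B) (hxF : IsAlgebraic F x) :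
    ∃ e : k, B.valuation (x - algebraMap k L e) < 1 := by
  obtain ⟨Q, hQx, hQB, j, hj⟩ := exists_aeval_eq_zero_coeff_mem (B := B) hxF
  choose e he using fun i => hF (Q.coeff i) (hQB i)
  let g : k[X] := ∑ i ∈ Finset.range (Q.natDegree + 1), Polynomial.C (e i) * X ^ i
  have hjdeg : j < Q.natDegree + 1 := Nat.lt_succ_of_le (le_natDegree_of_ne_zero (by simp [hj]))
  have hg : g ≠ 0 := by
    intro hg0
    have hej : e j = 0 := by
      simpa [g, finsetSum_coeff, coeff_C_mul_X_pow, hjdeg] using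
        congr_arg (fun p => Polynomial.coeff p j) hg0
    simpa [hj, hej] using he j
  refine exists_valuation_sub_lt_one_of_valuation_aeval_lt_one hk hg ?_
  have hgx : aeval x g = ∑ i ∈ Finset.range (Q.natDegree + 1),
      (algebraMap k L (e i) - algebraMap F L (Q.coeff i)) * x ^ i := by
    rw [← sub_zero (aeval x g), ← hQx, aeval_eq_sum_range (p := Q)]
    simp [g, map_sum, Algebra.smul_def, sub_mul]
  rw [hgx]
  refine B.valuation.map_sum_lt one_ne_zero fun i _ => ?_
  rw [map_mul, B.valuation.map_sub_swap]
  exact mul_lt_one_of_lt_of_le (he i) ((B.valuation_le_one_iff _).mpr (pow_mem hx i))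

end Residue


theorem exists_valuationSubring_valuation_lt_one_iff {A K : Type*} [CommRing A] [Field K]
    (P : Ideal A) [P.IsPrime] (f : A →+* K) (hf : ∀ a ∉ P, f a ≠ 0) :
    ∃ B : ValuationSubring K, ∀ a, B.valuation (f a) ≤ 1 ∧ (B.valuation (f a) < 1 ↔ a ∈ P) := by
  let g : Localization.AtPrime P →+* K :=
    IsLocalization.lift (M := P.primeCompl) fun a => (hf a a.2).isUnit
  obtain ⟨B, hgB, hloc⟩ := IsLocalRing.exists_factor_valuationRing g
  refine ⟨B, fun a => ?_⟩
  set b : B := g.codRestrict B.toSubring hgB (algebraMap A _ a)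
  have hb : (b : K) = f a := IsLocalization.lift_eq _ _
  have hunit : IsUnit b ↔ a ∉ P :=
    (isUnit_map_iff _ _).trans (IsLocalization.AtPrime.isUnit_to_map_iff _ P a)
  rw [← hb, (B.valuation_le_one b).lt_iff_ne, Ne, ← B.valuation_eq_one_iff, hunit, not_not]
  exact ⟨B.valuation_le_one b, Iff.rfl⟩

section Centered

variable {k L : Type*} [Field k] [Field L] [Algebra k L]

-- `B` dominates the local ring of `k[α]` at the maximal ideal `(α - c)`.
def IsCenteredAt (B : ValuationSubring L) (α : L) (c : k) : Prop :=
  ∀ p : k[X], B.valuation (aeval α p) ≤ 1 ∧ (B.valuation (aeval α p) < 1 ↔ p.eval c = 0)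

theorem exists_isCenteredAt {α : L} (hα : Transcendental k α) (c : k) :
    ∃ B : ValuationSubring L, IsCenteredAt B α c := by
  have := RingHom.ker_isPrime (evalRingHom c)
  obtain ⟨B, hB⟩ := exists_valuationSubring_valuation_lt_one_iff (RingHom.ker (evalRingHom c))
    (aeval α : k[X] →ₐ[k] L).toRingHom fun p hp hp0 => hα ⟨p, fun h => hp (h ▸ zero_mem _), hp0⟩
  exact ⟨B, fun p => by simpa using hB p⟩

theorem exists_eq_aeval_div_aeval {α y : L} (hy : y ∈ k⟮α⟯) :
    ∃ p q : k[X], q ≠ 0 ∧ y = aeval α p / aeval α q := by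
  obtain ⟨p, q, rfl⟩ := (mem_adjoin_simple_iff k y).mp hy
  rcases eq_or_ne q 0 with rfl | hq
  · exact ⟨0, 1, one_ne_zero, by simp⟩
  · exact ⟨p, q, hq, rfl⟩

namespace IsCenteredAt

variable {B : ValuationSubring L} {α : L} {c : k} (hB : IsCenteredAt B α c)
include hB

theorem aeval_mem (p : k[X]) : aeval α p ∈ B :=
  (B.valuation_le_one_iff _).mp (hB p).1

theorem algebraMap_mem (e : k) : algebraMap k L e ∈ B := by
  simpa using hB.aeval_mem (Polynomial.C e)

theorem valuation_aeval_eq_one {p : k[X]} (hp : p.eval c ≠ 0) : B.valuation (aeval α p) = 1 :=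
  le_antisymm (hB p).1 (not_lt.mp fun h => hp ((hB p).2.mp h))

theorem valuation_sub_lt_one : B.valuation (α - algebraMap k L c) < 1 := by
  have h := (hB (X - Polynomial.C c)).2.mpr (by simp)
  rwa [map_sub, aeval_X, aeval_C] at h

theorem exists_valuation_aeval_sub_C_mul_lt (hα : Transcendental k α) (p q : k[X]) (hq : q ≠ 0)
    (hpq : B.valuation (aeval α p) ≤ B.valuation (aeval α q)) :
    ∃ e : k, B.valuation (aeval α (p - Polynomial.C e * q)) < B.valuation (aeval α q) := by
  -- cancel the common factor `X - c` of `p` and `q` until `q(c) ≠ 0`; then take `e = p(c)/q(c)`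
  by_cases hqc : q.eval c = 0
  · obtain ⟨q', rfl⟩ := dvd_iff_isRoot.mpr hqc
    have hq' : q' ≠ 0 := right_ne_zero_of_mul hq
    obtain ⟨p', rfl⟩ := dvd_iff_isRoot.mpr ((hB p).2.mp (hpq.trans_lt ((hB _).2.mpr hqc)))
    have ht : 0 < B.valuation (aeval α (X - Polynomial.C c)) :=
      B.valuation.pos_iff.mpr fun h => hα ⟨_, X_sub_C_ne_zero c, h⟩
    have hdeg : q'.natDegree < ((X - Polynomial.C c) * q').natDegree := by
      rw [natDegree_mul (X_sub_C_ne_zero c) hq', natDegree_X_sub_C]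
      omega
    simp only [map_mul] at hpq ⊢
    obtain ⟨e, he⟩ :=
      exists_valuation_aeval_sub_C_mul_lt hα p' q' hq' (le_of_mul_le_mul_left hpq ht)
    refine ⟨e, ?_⟩
    rw [show (X - Polynomial.C c) * p' - Polynomial.C e * ((X - Polynomial.C c) * q')
      = (X - Polynomial.C c) * (p' - Polynomial.C e * q') by ring, map_mul]
    exact (mul_lt_mul_iff_of_pos_left ht).mpr he
  · refine ⟨p.eval c / q.eval c, ?_⟩
    rw [hB.valuation_aeval_eq_one hqc]
    exact (hB _).2.mpr (by simp [hqc])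
termination_by q.natDegree

theorem exists_valuation_sub_lt_one_of_mem_adjoin (hα : Transcendental k α) {y : L}
    (hy : y ∈ k⟮α⟯) (hyB : y ∈ B) : ∃ e : k, B.valuation (y - algebraMap k L e) < 1 := by
  obtain ⟨p, q, hq, rfl⟩ := exists_eq_aeval_div_aeval hy
  have hq0 : aeval α q ≠ 0 := fun h => hα ⟨q, hq, h⟩
  have hqv : 0 < B.valuation (aeval α q) := B.valuation.pos_iff.mpr hq0
  rw [← B.valuation_le_one_iff, map_div₀, div_le_one₀ hqv] at hyB
  obtain ⟨e, he⟩ := hB.exists_valuation_aeval_sub_C_mul_lt hα p q hq hyB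
  refine ⟨e, ?_⟩
  rw [div_sub' hq0, map_div₀, div_lt_one₀ hqv]
  simpa [mul_comm] using he

end IsCenteredAt

theorem exists_forall_isCenteredAt_mem {α x : L} (hx : IsAlgebraic k⟮α⟯ x) :
    ∃ w : k[X], w ≠ 0 ∧
      ∀ (B : ValuationSubring L) (c : k), IsCenteredAt B α c → w.eval c ≠ 0 → x ∈ B := by
  set m := minpoly k⟮α⟯ x
  choose p q hq hpq using fun i => exists_eq_aeval_div_aeval (m.coeff i).2
  refine ⟨∏ i ∈ m.support, q i, Finset.prod_ne_zero_iff.mpr fun i _ => hq i, fun B c hB hw => ?_⟩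
  rw [eval_prod, Finset.prod_ne_zero_iff] at hw
  have hcoeff : ∀ i, (m.coeff i : L) ∈ B := by
    intro i
    by_cases hi : i ∈ m.support
    · rw [hpq i, ← B.valuation_le_one_iff, map_div₀, hB.valuation_aeval_eq_one (hw i hi), div_one]
      exact (hB _).1
    · simp [notMem_support_iff.mp hi]
  obtain ⟨f, hf, -, hfm⟩ := lifts_and_natDegree_eq_and_monic (f := algebraMap B L)
    ((lifts_iff_coeff_lifts (m.map (algebraMap k⟮α⟯ L))).mpr fun i =>
      ⟨⟨_, hcoeff i⟩, by simp⟩) ((minpoly.monic hx.isIntegral).map _)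
  exact (B.valuation_le_one_iff x).mp <| B.integers.mem_of_integral
    ⟨f, hfm, by rw [← eval_map, hf, eval_map, ← aeval_def, minpoly.aeval]⟩

end Centered

theorem IsCenteredAt.exists_valuation_sub_lt_one {k L : Type*} [Field k] [IsAlgClosed k] [Field L]
    [Algebra k L] {B : ValuationSubring L} {α : L} {c : k} (hB : IsCenteredAt B α c)
    (hα : Transcendental k α) {x : L} (hx : x ∈ B) (hxα : IsAlgebraic k⟮α⟯ x) :
    ∃ e : k, B.valuation (x - algebraMap k L e) < 1 :=
  exists_valuation_sub_lt_one_of_isAlgebraic hB.algebraMap_mem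
    (fun y hy => hB.exists_valuation_sub_lt_one_of_mem_adjoin hα y.2 hy) hx hxα

theorem IsSingleTransBasis.isAlgebraic_adjoin {F : Type*} [Field F] {E E' : Subfield F} {α : F}
    (h : IsSingleTransBasis E E' α) {x : F} (hx : x ∈ E') : IsAlgebraic (↥E)⟮α⟯ x := by
  have hrange : Set.range (algebraMap E F) = E := Subtype.range_coe
  have hxalg := h.2.2 x hx
  rwa [← hrange, ← adjoin_toSubfield] at hxalg

theorem Set.Infinite.exists_mem_eval_ne_zero {k : Type*} [Field k] {S : Set k} (hS : S.Infinite)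
    {p : k[X]} (hp : p ≠ 0) : ∃ c ∈ S, p.eval c ≠ 0 := by
  obtain ⟨c, hcS, hc⟩ := (hS.sdiff p.roots.toFinset.finite_toSet).nonempty
  exact ⟨c, hcS, fun h => hc (by simpa [hp] using h)⟩

theorem exists_rational_place_general
    (E' : Type*) [Field E'] (K E : Subfield E') (hKE : K ≤ E)
    (hKinf : (K : Set E').Infinite)
    (hE : IsAlgClosed E)
    (α : E') (hα : IsSingleTransBasis E ⊤ α)
    (R : Subring E')
    (hR : ∃ s : Finset E', R = Subring.closure ((E : Set E') ∪ ↑s)) :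
    ∃ P : RatPlace (E : Set E') (Set.univ : Set E'),
      α ∈ P.dom ∧ α⁻¹ ∈ P.dom ∧ P.res α ∈ K ∧ P.res α⁻¹ ∈ K ∧
      (R : Set E') ⊆ ↑P.dom := by
  have halg : ∀ x : E', IsAlgebraic (↥E)⟮α⟯ x := fun x => hα.isAlgebraic_adjoin trivial
  obtain ⟨s, rfl⟩ := hR
  choose w hw0 hw using fun x => exists_forall_isCenteredAt_mem (halg x)
  obtain ⟨c, hcK, hc⟩ := (hKinf.preimage (f := ((↑) : E → E')) fun x hx => ⟨⟨x, hKE hx⟩, rfl⟩)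
    |>.exists_mem_eval_ne_zero (p := X * ∏ x ∈ s, w x)
      (mul_ne_zero X_ne_zero (Finset.prod_ne_zero_iff.mpr fun x _ => hw0 x))
  simp only [eval_mul, eval_X, eval_prod, mul_ne_zero_iff, Finset.prod_ne_zero_iff] at hc
  obtain ⟨B, hB⟩ := exists_isCenteredAt hα.2.1 c
  have hEB : (E : Set E') ⊆ B := fun e he => hB.algebraMap_mem ⟨e, he⟩
  let P := RatPlace.ofValuationSubring B E hEB fun x hx => by
    obtain ⟨e, he⟩ := hB.exists_valuation_sub_lt_one hα.2.1 hx (halg x)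
    exact ⟨e, e.2, he⟩
  have hαB : α ∈ B := by simpa using hB.aeval_mem X
  have hαc : P.res α = c := ValuationSubring.residueIn_eq hEB c.2 hB.valuation_sub_lt_one
  have hc0 : P.res α ≠ 0 := by simpa [hαc] using hc.1
  refine ⟨P, hαB, P.res_unit α hαB hc0, hαc ▸ hcK, ?_, ?_⟩
  · rw [P.res_inv hαB hc0, hαc]
    exact K.inv_mem hcK
  · exact Subring.closure_le.mpr (Set.union_subset hEB fun x hx => hw x B c hB (hc.2 x hx))

/-- Consider a tower of fields `K ⊆ E ⊆ E'` where `K` is infinite and `E'/E` is an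
extension of algebraically closed fields with transcendence basis `{α}`.  If `R` is a
subring of `E'` finitely generated over `E`, then there is an `E`-rational place `P` of
`E'` sending `α` and `α⁻¹` into `K` and finite on `R`. -/
theorem exists_rational_place
    (E' : Type*) [Field E'] (K E : Subfield E') (hKE : K ≤ E)
    (hKinf : (K : Set E').Infinite)
    (hE : IsAlgClosed E) (hE' : IsAlgClosed E')
    (α : E') (hα : IsSingleTransBasis E ⊤ α)
    (R : Subring E')
    (hR : ∃ s : Finset E', R = Subring.closure ((E : Set E') ∪ ↑s)) :
    ∃ P : RatPlace (E : Set E') (Set.univ : Set E'),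
      α ∈ P.dom ∧ α⁻¹ ∈ P.dom ∧ P.res α ∈ K ∧ P.res α⁻¹ ∈ K ∧
      (R : Set E') ⊆ ↑P.dom :=
  exists_rational_place_general E' K E hKE hKinf hE α hα R hR
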